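/- arXiv:1112.3577 — 3 statements merged into one kernel-verified Lean document; each statement's English description precedes it below -/
import Mathlib

section
/- A nonzero vector v ∈ Λᵏℝⁿ with coordinates v = Σ_{1≤i₁<…<i_k≤n} μ_{i₁…i_k} e_{i₁}∧…∧e_{i_k} is decomposable if and only if for all indices 1 ≤ i₁ < … < i_{k+1} ≤ n and 1 ≤ j₁ < … < j_{k-1} ≤ n the Plücker relations Σ_{p=1}^{k+1} (−1)ᵖ μ_{i₁…ı̂_p…i_{k+1}} μ_{i_p j₁…j_{k-1}} = 0 hold, where ı̂_p denotes omission of the index i_p, and where μ with a repeated index is zero and μ with an unordered index tuple is defined by full antisymmetry in its indices. -/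
open scoped BigOperators

/-- The index set `Π` of strictly increasing `k`-tuples from `{1,…,n}`,
realized as `k`-element subsets of `Fin n`. -/
abbrev PIdx (n k : ℕ) : Type := {s : Finset (Fin n) // s.card = k}

/-- The strictly increasing tuple `(i₁ < … < i_k)` enumerating `α ∈ Π`. -/
noncomputable def toTuple {n k : ℕ} (α : PIdx n k) : Fin k → Fin n :=
  fun j => (α.1.orderIsoOfFin α.2 j : Fin n)

/-- Coordinates of the decomposable vector `x₁ ∧ … ∧ x_k` in the standard basis
`{e_α : α ∈ Π}` of `Λᵏℝⁿ`:  the `α`-coordinate is the `k × k` minor of the matrix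
whose rows are the `xᵢ`, taken on the columns listed by `α`. -/
noncomputable def wedgeCoords {R : Type} [CommRing R] {n k : ℕ} (x : Fin k → Fin n → R) :
    PIdx n k → R :=
  fun α => Matrix.det (Matrix.of fun i j => x i (toTuple α j))

/-- The model of `Λᵏℝⁿ` inside polynomials: a vector `w = Σ w_α e_α` is sent to the
linear polynomial `Σ_α w_α • X_α`.  The `m`-th symmetric power `Sᵐ(Λᵏℝⁿ)` is then the
space of homogeneous polynomials of degree `m` in the variables `X_α`, the symmetric
product `∨` being polynomial multiplication. -/
noncomputable def linPoly {R : Type} [CommRing R] {n k : ℕ} (w : PIdx n k → R) :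
    MvPolynomial (PIdx n k) R :=
  ∑ α, MvPolynomial.C (w α) * MvPolynomial.X α

/-- `V₀(m,n,k)`: the linear span of the `m`-th powers `(x₁ ∧ … ∧ x_k)ᵐ` of decomposable
vectors inside `Sᵐ(Λᵏℝⁿ)` (polynomial model). -/
noncomputable def V0 (m n k : ℕ) : Submodule ℝ (MvPolynomial (PIdx n k) ℝ) :=
  Submodule.span ℝ {p | ∃ x : Fin k → Fin n → ℝ, p = (linPoly (wedgeCoords x)) ^ m}

/-- The sign `ε(f) = ∏_{p<q} sgn(f(q) - f(p))` of a tuple of indices: it is the sign of the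
permutation sorting `f` when `f` is injective, and `0` otherwise. -/
noncomputable def epsSign {k n : ℕ} (f : Fin k → Fin n) : ℝ :=
  ∏ p ∈ Finset.univ.filter (fun p : Fin k × Fin k => p.1 < p.2),
    Real.sign ((f p.2 : ℝ) - (f p.1 : ℝ))

/-- The coordinate function `μ` of a vector `v ∈ Λᵏℝⁿ`, extended to arbitrary index tuples
by full antisymmetry: it vanishes on tuples with a repeated index, and on an injective tuple
it equals the sign of the sorting permutation times the coordinate at the sorted tuple. -/
noncomputable def coordExt {n k : ℕ} (v : PIdx n k → ℝ) (f : Fin k → Fin n) : ℝ :=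
  if h : Function.Injective f then
    epsSign f * v ⟨Finset.univ.image f, by
      rw [Finset.card_image_of_injective _ h, Finset.card_univ, Fintype.card_fin]⟩
  else 0

/-!
The forward direction is a Laplace expansion: expanding the second minor of each term along its
first column turns the Plücker sum into a combination of determinants with a repeated row.

For the converse pick `α₀` with `v α₀ ≠ 0` and let `x_r(q) = μ(α₀ with its r-th index replaced
by q)`. The relations say that `g ↦ μ(g) μ(α₀)^(k-1)` and `g ↦ det (x_r(g_s))` satisfy the same
exchange identity along every `(k+1)`-tuple containing `α₀`. Both are alternating and they agree
on `α₀`, so induction on the number of indices of `g` outside `α₀` shows that they agree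
everywhere; rescaling one row of `x` then gives `v = x₁ ∧ … ∧ x_k`.
-/

open Finset

theorem Real.sign_eq_coe_sign (r : ℝ) : Real.sign r = ((SignType.sign r : SignType) : ℝ) := by
  rcases lt_trichotomy r 0 with h | rfl | h
  · simp [Real.sign_of_neg h, h]
  · simp [Real.sign_zero]
  · simp [Real.sign_of_pos h, h]

theorem Real.sign_prod {ι : Type*} (s : Finset ι) (g : ι → ℝ) :
    Real.sign (∏ i ∈ s, g i) = ∏ i ∈ s, Real.sign (g i) := by
  simp only [Real.sign_eq_coe_sign]
  exact map_prod (SignType.castHom.comp signHom) g s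

lemma epsSign_eq_sign_det_vandermonde {k n : ℕ} (f : Fin k → Fin n) :
    epsSign f = Real.sign (Matrix.vandermonde fun p => (f p : ℝ)).det := by
  rw [Matrix.det_vandermonde, Real.sign_prod, epsSign, prod_filter, ← univ_product_univ,
    prod_product]
  refine prod_congr rfl fun p _ => ?_
  rw [Real.sign_prod, ← prod_filter]
  congr 1
  ext q; simp

lemma epsSign_comp_perm {k n : ℕ} (f : Fin k → Fin n) (σ : Equiv.Perm (Fin k)) :
    epsSign (f ∘ σ) = Equiv.Perm.sign σ * epsSign f := by
  rw [epsSign_eq_sign_det_vandermonde, epsSign_eq_sign_det_vandermonde]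
  have : Matrix.vandermonde (fun p => ((f ∘ σ) p : ℝ))
      = (Matrix.vandermonde fun p => (f p : ℝ)).submatrix σ id := rfl
  rw [this, Matrix.det_permute]
  rcases Int.units_eq_one_or (Equiv.Perm.sign σ) with h | h <;> simp [h, Real.sign_neg]

lemma epsSign_of_strictMono {k n : ℕ} {f : Fin k → Fin n} (hf : StrictMono f) :
    epsSign f = 1 :=
  prod_eq_one fun _ hp =>
    Real.sign_of_pos (sub_pos.mpr (Nat.cast_lt.mpr (hf (mem_filter.mp hp).2)))

lemma exists_perm_eq_comp_of_image_eq {X : Type*} [DecidableEq X] {k : ℕ} {f g : Fin k → X}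
    (hf : Function.Injective f) (hg : Function.Injective g)
    (h : univ.image f = univ.image g) : ∃ σ : Equiv.Perm (Fin k), f = g ∘ σ := by
  have hrange : Set.range f = Set.range g := by
    simpa [← coe_inj, coe_image] using h
  refine ⟨(Equiv.ofInjective f hf).trans ((Equiv.setCongr hrange).trans
    (Equiv.ofInjective g hg).symm), funext fun t => ?_⟩
  simp [Equiv.apply_ofInjective_symm]

lemma toTuple_strictMono {n k : ℕ} (α : PIdx n k) : StrictMono (toTuple α) :=
  fun _ _ h => (α.1.orderIsoOfFin α.2).strictMono h

lemma image_toTuple {n k : ℕ} (α : PIdx n k) : univ.image (toTuple α) = α.1 :=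
  α.1.image_orderEmbOfFin_univ α.2

lemma exists_strictMono_image_eq {n k : ℕ} (s : Finset (Fin n)) (hs : s.card = k) :
    ∃ i : Fin k → Fin n, StrictMono i ∧ univ.image i = s :=
  ⟨toTuple ⟨s, hs⟩, toTuple_strictMono _, image_toTuple _⟩

lemma Fin.image_cons_univ {X : Type*} [DecidableEq X] {m : ℕ} (q : X) (j : Fin m → X) :
    univ.image (Fin.cons q j : Fin (m + 1) → X) = insert q (univ.image j) := by
  ext; simp [Fin.exists_fin_succ, eq_comm]

lemma Fin.image_removeNth_univ {X : Type*} [DecidableEq X] {m : ℕ} {i : Fin (m + 1) → X}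
    (hi : Function.Injective i) (p : Fin (m + 1)) :
    univ.image (p.removeNth i) = (univ.image i).erase (i p) := by
  rw [show p.removeNth i = i ∘ p.succAbove from rfl, ← image_image, Fin.image_succAbove_univ,
    compl_singleton, image_erase hi]

section coordExt

variable {n k : ℕ} (v : PIdx n k → ℝ)

lemma coordExt_of_not_injective {f : Fin k → Fin n} (hf : ¬ Function.Injective f) :
    coordExt v f = 0 :=
  dif_neg hf

lemma coordExt_comp_perm (f : Fin k → Fin n) (σ : Equiv.Perm (Fin k)) :
    coordExt v (f ∘ σ) = Equiv.Perm.sign σ * coordExt v f := by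
  by_cases hf : Function.Injective f
  · have himage : univ.image (f ∘ σ) = univ.image f := by
      rw [← image_image, image_univ_equiv]
    simp only [coordExt, dif_pos hf, dif_pos (hf.comp σ.injective), epsSign_comp_perm, himage]
    ring
  · rw [coordExt_of_not_injective v hf, coordExt_of_not_injective v
      fun h => hf (by simpa using h.comp σ.symm.injective), mul_zero]

lemma coordExt_of_strictMono {f : Fin k → Fin n} (hf : StrictMono f) {α : PIdx n k}
    (h : univ.image f = α.1) : coordExt v f = v α := by
  rw [coordExt, dif_pos hf.injective, epsSign_of_strictMono hf, one_mul]
  exact congrArg v (Subtype.ext h)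

lemma coordExt_toTuple (α : PIdx n k) : coordExt v (toTuple α) = v α :=
  coordExt_of_strictMono v (toTuple_strictMono α) (image_toTuple α)

end coordExt

lemma coordExt_update {m : ℕ} (v : PIdx n (m + 1) → ℝ) (a : Fin (m + 1) → Fin n)
    (r : Fin (m + 1)) (q : Fin n) :
    coordExt v (Function.update a r q)
      = (-1) ^ (r : ℕ) * coordExt v (Fin.cons q (r.removeNth a)) := by
  rw [← Fin.insertNth_removeNth, ← Fin.cons_comp_cycleRange, coordExt_comp_perm,
    Fin.sign_cycleRange]
  push_cast
  ring

section colMinor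

variable {R : Type*} [CommRing R] {n : ℕ}

def colMinor {k : ℕ} (x : Fin k → Fin n → R) (g : Fin k → Fin n) : R :=
  (Matrix.of fun r s => x r (g s)).det

lemma colMinor_comp_perm {k : ℕ} (x : Fin k → Fin n → R) (g : Fin k → Fin n)
    (σ : Equiv.Perm (Fin k)) : colMinor x (g ∘ σ) = Equiv.Perm.sign σ * colMinor x g :=
  Matrix.det_permute' σ (Matrix.of fun r s => x r (g s))

lemma colMinor_of_not_injective {k : ℕ} (x : Fin k → Fin n → R) {g : Fin k → Fin n}
    (hg : ¬ Function.Injective g) : colMinor x g = 0 := by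
  obtain ⟨s, s', hss', hne⟩ := Function.not_injective_iff.mp hg
  exact Matrix.det_zero_of_column_eq hne fun r => by simp [hss']

lemma colMinor_cons {m : ℕ} (x : Fin (m + 1) → Fin n → R) (q : Fin n) (j : Fin m → Fin n) :
    colMinor x (Fin.cons q j) =
      ∑ r : Fin (m + 1), (-1) ^ (r : ℕ) * x r q * colMinor (fun r' => x (r.succAbove r')) j :=
  Matrix.det_succ_column_zero _

/-- Linearity of the minor in its first column. -/
lemma sum_mul_colMinor_cons_eq_zero {ι : Type*} [Fintype ι] {m : ℕ}
    (x : Fin (m + 1) → Fin n → R) (w : ι → R) (q : ι → Fin n) (j : Fin m → Fin n)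
    (h : ∀ r, ∑ p, w p * x r (q p) = 0) :
    ∑ p, w p * colMinor x (Fin.cons (q p) j) = 0 := by
  simp only [colMinor_cons, mul_sum]
  rw [sum_comm]
  refine sum_eq_zero fun r _ => ?_
  calc ∑ p, w p * ((-1) ^ (r : ℕ) * x r (q p) * colMinor (fun r' => x (r.succAbove r')) j)
      = (-1) ^ (r : ℕ) * colMinor (fun r' => x (r.succAbove r')) j * ∑ p, w p * x r (q p) := by
        rw [mul_sum]; exact sum_congr rfl fun p _ => by ring
    _ = 0 := by rw [h r, mul_zero]

/-- Laplace expansion of an `(m + 2)`-square matrix whose first row repeats row `r`. -/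
lemma sum_mul_colMinor_removeNth_eq_zero {m : ℕ} (x : Fin (m + 1) → Fin n → R)
    (i : Fin (m + 2) → Fin n) (r : Fin (m + 1)) :
    ∑ p : Fin (m + 2), (-1) ^ (p : ℕ) * x r (i p) * colMinor x (p.removeNth i) = 0 := by
  have hzero : (Matrix.of fun a b => (Fin.cons (x r) x : Fin (m + 2) → Fin n → R) a (i b)).det
      = 0 :=
    Matrix.det_zero_of_row_eq (Fin.succ_ne_zero r).symm (by ext; simp)
  rwa [Matrix.det_succ_row_zero] at hzero

lemma colMinor_pluecker {m : ℕ} (x : Fin (m + 1) → Fin n → R) (i : Fin (m + 2) → Fin n)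
    (j : Fin m → Fin n) :
    ∑ p : Fin (m + 2), (-1) ^ ((p : ℕ) + 1) *
      (colMinor x (p.removeNth i) * colMinor x (Fin.cons (i p) j)) = 0 := by
  simp only [← mul_assoc]
  refine sum_mul_colMinor_cons_eq_zero x _ i j fun r => ?_
  rw [← neg_eq_zero, ← sum_neg_distrib, ← sum_mul_colMinor_removeNth_eq_zero x i r]
  exact sum_congr rfl fun p _ => by ring

end colMinor

lemma wedgeCoords_eq_colMinor {R : Type} [CommRing R] {n k : ℕ} (x : Fin k → Fin n → R)
    (α : PIdx n k) :
    wedgeCoords x α = colMinor x (toTuple α) :=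
  rfl

lemma coordExt_wedgeCoords {n k : ℕ} (x : Fin k → Fin n → ℝ) (g : Fin k → Fin n) :
    coordExt (wedgeCoords x) g = colMinor x g := by
  by_cases hg : Function.Injective g
  · let α : PIdx n k := ⟨univ.image g, by simp [card_image_of_injective _ hg]⟩
    obtain ⟨σ, hσ⟩ := exists_perm_eq_comp_of_image_eq hg (toTuple_strictMono α).injective
      (image_toTuple α).symm
    rw [hσ, coordExt_comp_perm, colMinor_comp_perm, coordExt_toTuple]
    rfl
  · rw [coordExt_of_not_injective _ hg, colMinor_of_not_injective x hg]

def PlueckerRelations {n m : ℕ} (v : PIdx n (m + 1) → ℝ) : Prop :=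
  ∀ i : Fin (m + 2) → Fin n, StrictMono i → ∀ j : Fin m → Fin n, StrictMono j →
    ∑ p : Fin (m + 2), (-1 : ℝ) ^ ((p : ℕ) + 1) *
      (coordExt v (p.removeNth i) * coordExt v (Fin.cons (i p) j)) = 0

/-- If `v = x₁ ∧ … ∧ x_k` and `coordExt v a ≠ 0`, these rows span the same `k`-plane as the `xᵢ`. -/
noncomputable def plueckerRows {n m : ℕ} (v : PIdx n (m + 1) → ℝ) (a : Fin (m + 1) → Fin n) :
    Fin (m + 1) → Fin n → ℝ :=
  fun r q => coordExt v (Function.update a r q)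

section Decomposition

variable {n m : ℕ} {v : PIdx n (m + 1) → ℝ}

lemma colMinor_plueckerRows_self (a : Fin (m + 1) → Fin n) :
    colMinor (plueckerRows v a) a = coordExt v a ^ (m + 1) := by
  have hdiag : (Matrix.of fun r s => plueckerRows v a r (a s))
      = Matrix.diagonal fun _ => coordExt v a := by
    ext r s
    rcases eq_or_ne r s with rfl | hrs
    · simp [plueckerRows]
    · rw [Matrix.of_apply, Matrix.diagonal_apply_ne _ hrs, plueckerRows,
        coordExt_of_not_injective]
      intro hinj
      exact hrs (hinj (by simp [Function.update_of_ne hrs.symm]))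
  simp [colMinor, hdiag]

lemma coordExt_mul_pow_eq_colMinor_of_not_injective (a : Fin (m + 1) → Fin n)
    {g : Fin (m + 1) → Fin n} (hg : ¬ Function.Injective g) :
    coordExt v g * coordExt v a ^ m = colMinor (plueckerRows v a) g := by
  rw [coordExt_of_not_injective v hg, colMinor_of_not_injective _ hg, zero_mul]

lemma coordExt_mul_pow_eq_colMinor_of_image_eq (a : Fin (m + 1) → Fin n)
    {f g : Fin (m + 1) → Fin n} (hf : Function.Injective f) (hg : Function.Injective g)
    (himage : univ.image f = univ.image g)
    (h : coordExt v g * coordExt v a ^ m = colMinor (plueckerRows v a) g) :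
    coordExt v f * coordExt v a ^ m = colMinor (plueckerRows v a) f := by
  obtain ⟨σ, rfl⟩ := exists_perm_eq_comp_of_image_eq hf hg himage
  rw [coordExt_comp_perm, colMinor_comp_perm, ← h]
  ring

lemma PlueckerRelations.sum_mul_colMinor_plueckerRows_eq_zero (hv : PlueckerRelations v)
    {a : Fin (m + 1) → Fin n} (ha : StrictMono a) {i : Fin (m + 2) → Fin n} (hi : StrictMono i)
    (j : Fin m → Fin n) :
    ∑ p : Fin (m + 2), (-1 : ℝ) ^ ((p : ℕ) + 1) *
      (coordExt v (p.removeNth i) * colMinor (plueckerRows v a) (Fin.cons (i p) j)) = 0 := by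
  simp only [← mul_assoc]
  refine sum_mul_colMinor_cons_eq_zero _ _ i j fun r => ?_
  have hrel := hv i hi (r.removeNth a) (ha.removeNth r)
  calc ∑ p : Fin (m + 2), (-1 : ℝ) ^ ((p : ℕ) + 1) * coordExt v (p.removeNth i) *
        plueckerRows v a r (i p)
      = (-1) ^ (r : ℕ) * ∑ p : Fin (m + 2), (-1 : ℝ) ^ ((p : ℕ) + 1) *
          (coordExt v (p.removeNth i) * coordExt v (Fin.cons (i p) (r.removeNth a))) := by
        rw [mul_sum]
        refine sum_congr rfl fun p _ => ?_
        rw [plueckerRows, coordExt_update]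
        ring
    _ = 0 := by rw [hrel, mul_zero]

lemma PlueckerRelations.coordExt_mul_pow_eq_colMinor_of_forall_ne (hv : PlueckerRelations v)
    {a : Fin (m + 1) → Fin n} (ha : StrictMono a) {i : Fin (m + 2) → Fin n} (hi : StrictMono i)
    {j : Fin m → Fin n} (hj : StrictMono j) {pb : Fin (m + 2)}
    (hpb : coordExt v (pb.removeNth i) ≠ 0)
    (h : ∀ p ≠ pb, coordExt v (Fin.cons (i p) j) * coordExt v a ^ m
      = colMinor (plueckerRows v a) (Fin.cons (i p) j)) :
    coordExt v (Fin.cons (i pb) j) * coordExt v a ^ m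
      = colMinor (plueckerRows v a) (Fin.cons (i pb) j) := by
  have hsum : ∑ p : Fin (m + 2), (-1 : ℝ) ^ ((p : ℕ) + 1) * (coordExt v (p.removeNth i) *
      (coordExt v (Fin.cons (i p) j) * coordExt v a ^ m
        - colMinor (plueckerRows v a) (Fin.cons (i p) j))) = 0 := by
    calc _ = (∑ p : Fin (m + 2), (-1 : ℝ) ^ ((p : ℕ) + 1) *
            (coordExt v (p.removeNth i) * coordExt v (Fin.cons (i p) j))) * coordExt v a ^ m
          - ∑ p : Fin (m + 2), (-1 : ℝ) ^ ((p : ℕ) + 1) *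
            (coordExt v (p.removeNth i) * colMinor (plueckerRows v a) (Fin.cons (i p) j)) := by
          rw [sum_mul, ← sum_sub_distrib]
          exact sum_congr rfl fun p _ => by ring
      _ = 0 := by
          rw [hv i hi j hj, hv.sum_mul_colMinor_plueckerRows_eq_zero ha hi j, zero_mul, sub_zero]
  rw [sum_eq_single pb (fun p _ hp => by rw [h p hp, sub_self, mul_zero, mul_zero])
    (by simp)] at hsum
  simpa [hpb, sub_eq_zero] using hsum

lemma PlueckerRelations.coordExt_mul_pow_eq_colMinor (hv : PlueckerRelations v)
    {α₀ : PIdx n (m + 1)} (hα₀ : v α₀ ≠ 0) (g : Fin (m + 1) → Fin n) :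
    coordExt v g * coordExt v (toTuple α₀) ^ m = colMinor (plueckerRows v (toTuple α₀)) g := by
  set a := toTuple α₀
  suffices key : ∀ t g, Function.Injective g → (univ.image g \ α₀.1).card = t →
      coordExt v g * coordExt v a ^ m = colMinor (plueckerRows v a) g by
    by_cases hg : Function.Injective g
    · exact key _ g hg rfl
    · exact coordExt_mul_pow_eq_colMinor_of_not_injective a hg
  intro t
  induction t with
  | zero =>
    intro g hg hcard
    have himage : univ.image g = univ.image a := by
      refine eq_of_subset_of_card_le ?_ ?_
      · simpa [a, image_toTuple, sdiff_eq_empty_iff_subset] using hcard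
      · simp [a, image_toTuple, α₀.2, card_image_of_injective _ hg]
    refine coordExt_mul_pow_eq_colMinor_of_image_eq a hg (toTuple_strictMono α₀).injective
      himage ?_
    rw [colMinor_plueckerRows_self, pow_succ']
  | succ t ih =>
    intro g hg hcard
    obtain ⟨b, hb⟩ : (univ.image g \ α₀.1).Nonempty := card_pos.mp (by omega)
    obtain ⟨hbg, hbα⟩ := mem_sdiff.mp hb
    obtain ⟨i, hi, hiimage⟩ := exists_strictMono_image_eq (k := m + 2) (insert b α₀.1)
      (by rw [card_insert_of_notMem hbα, α₀.2])
    obtain ⟨j, hj, hjimage⟩ := exists_strictMono_image_eq (k := m) ((univ.image g).erase b)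
      (by rw [card_erase_of_mem hbg, card_image_of_injective _ hg]; simp)
    obtain ⟨pb, -, hpb⟩ := mem_image.mp (hiimage ▸ mem_insert_self b α₀.1)
    have hbj : b ∉ univ.image j := by simp [hjimage]
    refine coordExt_mul_pow_eq_colMinor_of_image_eq a hg
      (Fin.cons_injective_iff.mpr ⟨by simpa using hbj, hj.injective⟩)
      (by rw [Fin.image_cons_univ, hjimage, insert_erase hbg]) ?_
    rw [← hpb]
    refine hv.coordExt_mul_pow_eq_colMinor_of_forall_ne (toTuple_strictMono α₀) hi hj ?_
      fun p hp => ?_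
    · rwa [coordExt_of_strictMono v (hi.removeNth pb) (α := α₀)
        (by rw [Fin.image_removeNth_univ hi.injective, hiimage, hpb, erase_insert hbα])]
    · have hip : i p ∈ α₀.1 := by
        have := hiimage ▸ mem_image_of_mem i (mem_univ p)
        exact (mem_insert.mp this).resolve_left fun h => hp (hi.injective (h.trans hpb.symm))
      by_cases hinj : Function.Injective (Fin.cons (i p) j : Fin (m + 1) → Fin n)
      · refine ih _ hinj ?_
        have : univ.image (Fin.cons (i p) j : Fin (m + 1) → Fin n) \ α₀.1
            = (univ.image g \ α₀.1).erase b := by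
          rw [Fin.image_cons_univ, hjimage, insert_sdiff_of_mem _ hip, erase_sdiff_comm]
        rw [this, card_erase_of_mem hb, hcard, Nat.add_sub_cancel]
      · exact coordExt_mul_pow_eq_colMinor_of_not_injective a hinj

end Decomposition

lemma PlueckerRelations.exists_eq_wedgeCoords {n m : ℕ} {v : PIdx n (m + 1) → ℝ}
    (hv : PlueckerRelations v) (h0 : v ≠ 0) : ∃ x, v = wedgeCoords x := by
  obtain ⟨α₀, hα₀⟩ : ∃ α₀, v α₀ ≠ 0 := Function.ne_iff.mp h0
  set a := toTuple α₀
  have hc : v α₀ ^ m ≠ 0 := pow_ne_zero m hα₀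
  let w : Fin (m + 1) → ℝ := Fin.cons (v α₀ ^ m)⁻¹ 1
  refine ⟨fun r q => w r * plueckerRows v a r q, funext fun α => ?_⟩
  calc v α = (v α₀ ^ m)⁻¹ * colMinor (plueckerRows v a) (toTuple α) := by
        rw [← hv.coordExt_mul_pow_eq_colMinor hα₀, coordExt_toTuple, coordExt_toTuple,
          mul_comm (v α), inv_mul_cancel_left₀ hc]
    _ = (∏ r, w r) * colMinor (plueckerRows v a) (toTuple α) := by simp [w, Fin.prod_univ_succ]
    _ = wedgeCoords (fun r q => w r * plueckerRows v a r q) α := (Matrix.det_mul_column w _).symm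

lemma dite_eq_cons {n m : ℕ} (z : Fin n) (j : Fin m → Fin n) :
    (fun t : Fin (m + 1) => if ht : (t : ℕ) = 0 then z
      else j ⟨(t : ℕ) - 1, by have := t.isLt; omega⟩) = Fin.cons z j := by
  funext t
  cases t using Fin.cases <;> simp

/-- **Plücker relations.** A nonzero vector
`v = Σ μ_{i₁…i_k} e_{i₁}∧…∧e_{i_k} ∈ Λᵏℝⁿ` is decomposable (i.e. equals
`x₁ ∧ … ∧ x_k` for some `xᵢ ∈ ℝⁿ`, here expressed through its Plücker coordinates
`wedgeCoords x`) if and only if for all `1 ≤ i₁ < … < i_{k+1} ≤ n` and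
`1 ≤ j₁ < … < j_{k-1} ≤ n` the relations
`Σ_{p=1}^{k+1} (−1)ᵖ μ_{i₁…ı̂_p…i_{k+1}} μ_{i_p j₁…j_{k-1}} = 0` hold, where `μ` is
extended to arbitrary tuples by full antisymmetry (`coordExt`). -/
theorem decomposable_iff_pluecker (n k : ℕ) (hk : 1 ≤ k)
    (v : PIdx n k → ℝ) (hv : v ≠ 0) :
    (∃ x : Fin k → Fin n → ℝ, v = wedgeCoords x) ↔
      ∀ (i : Fin (k + 1) → Fin n), StrictMono i →
        ∀ (j : Fin (k - 1) → Fin n), StrictMono j →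
          ∑ p : Fin (k + 1), (-1 : ℝ) ^ ((p : ℕ) + 1) *
            (coordExt v (fun t => i (p.succAbove t)) *
              coordExt v (fun t : Fin k =>
                if ht : (t : ℕ) = 0 then i p
                else j ⟨(t : ℕ) - 1, by have := t.isLt; omega⟩)) = 0 := by
  obtain ⟨m, rfl⟩ : ∃ m, k = m + 1 := ⟨k - 1, by omega⟩
  simp only [dite_eq_cons]
  change _ ↔ PlueckerRelations v
  constructor
  · rintro ⟨x, rfl⟩ i - j -
    simpa only [coordExt_wedgeCoords] using colMinor_pluecker x i j
  · exact fun hrel => hrel.exists_eq_wedgeCoords hv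
end

section
/- The subspace V₀(m,n,k) coincides with the linear span of the set of vectors (x₁∧y₂∧…∧y_k) ∨ (x₂∧y₂∧…∧y_k) ∨ … ∨ (x_m∧y₂∧…∧y_k), where x₁,…,x_m, y₂,…,y_k range over ℝⁿ. -/
open scoped BigOperators

/-! The inclusion `⊆` is the case `x₁ = … = x_m`. Conversely, the first row enters
`x ∧ y₂ ∧ … ∧ y_k` linearly, so with `z_s = x_s ∧ y₂ ∧ … ∧ y_k` the polarization identity
`m! z₁ ⋯ z_m = Σ_{t ⊆ [m]} (-1)^|t| (Σ_{s ∉ t} z_s)^m` (inclusion–exclusion over the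
surjective maps `[m] → [m]`) writes each product as a combination of `m`-th powers of the
decomposable vectors `(Σ_{s ∉ t} x_s) ∧ y₂ ∧ … ∧ y_k`. -/

open Finset Nat

namespace Finset

variable {ι R : Type*} [Fintype ι] [DecidableEq ι] [CommRing R]

lemma sum_perm_prod_comp (z : ι → R) :
    ∑ σ : Equiv.Perm ι, ∏ i, z (σ i) = (Fintype.card ι)! • ∏ i, z i := by
  simp only [Equiv.prod_comp, sum_const, card_univ, Fintype.card_perm]

lemma sum_pow_card_eq_sum_piFinset (A : Finset ι) (z : ι → R) :
    (∑ i ∈ A, z i) ^ Fintype.card ι = ∑ g ∈ Fintype.piFinset fun _ : ι ↦ A, ∏ j, z (g j) := by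
  rw [sum_prod_piFinset, prod_const, card_univ]

theorem factorial_card_smul_prod_eq_sum_neg_one_pow_smul_pow (z : ι → R) :
    (Fintype.card ι)! • ∏ i, z i =
      ∑ t : Finset ι, (-1 : ℤ) ^ #t • (∑ i ∈ tᶜ, z i) ^ Fintype.card ι := by
  set missing : ι → Finset (ι → ι) := fun i ↦ univ.filter fun g ↦ ∀ j, g j ≠ i
  have hsurj : (univ.inf fun i ↦ (missing i)ᶜ) =
      univ.map ⟨fun σ : Equiv.Perm ι ↦ ⇑σ, DFunLike.coe_injective⟩ := by
    ext g
    simp only [missing, mem_inf, mem_univ, mem_compl, mem_filter, forall_const, ne_eq,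
      not_forall, not_not, mem_map, Function.Embedding.coeFn_mk, true_and]
    exact ⟨fun h ↦ ⟨.ofBijective g (Finite.surjective_iff_bijective.mp h), rfl⟩,
      fun ⟨σ, hσ⟩ ↦ hσ ▸ σ.surjective⟩
  have hmiss (t : Finset ι) : t.inf missing = Fintype.piFinset fun _ ↦ tᶜ := by
    ext g
    simp only [missing, mem_inf, mem_filter, mem_univ, true_and, Fintype.mem_piFinset,
      mem_compl]
    exact ⟨fun h j hj ↦ h _ hj j rfl, fun h i hi j hj ↦ h j (hj ▸ hi)⟩
  have := inclusion_exclusion_sum_inf_compl univ missing fun g ↦ ∏ j, z (g j)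
  rw [hsurj, sum_map] at this
  simpa only [hmiss, ← sum_pow_card_eq_sum_piFinset, powerset_univ, Function.Embedding.coeFn_mk,
    sum_perm_prod_comp] using this

end Finset

section FirstRow

variable {R : Type} [CommRing R] {n k : ℕ}

lemma linPoly_sum {ι : Type*} (s : Finset ι) (w : ι → PIdx n k → R) :
    linPoly (∑ j ∈ s, w j) = ∑ j ∈ s, linPoly (w j) := by
  simp only [linPoly, Finset.sum_apply, map_sum, sum_mul]
  exact sum_comm

lemma wedgeCoords_update_sum (y : Fin k → Fin n → R) (i : Fin k) {ι : Type*}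
    (s : Finset ι) (x : ι → Fin n → R) :
    wedgeCoords (Function.update y i (∑ j ∈ s, x j)) =
      ∑ j ∈ s, wedgeCoords (Function.update y i (x j)) := by
  classical
  ext α
  let rowMap : (Fin n → R) →ₗ[R] R :=
    (Matrix.detRowAlternating : (Fin k → R) [⋀^Fin k]→ₗ[R] R).toMultilinearMap.toLinearMap
      (fun i' ↦ y i' ∘ toTuple α) i ∘ₗ LinearMap.funLeft R R (toTuple α)
  have hrows (v : Fin n → R) : wedgeCoords (Function.update y i v) α = rowMap v := by
    simp only [rowMap, wedgeCoords, LinearMap.comp_apply, MultilinearMap.toLinearMap_apply,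
      AlternatingMap.coe_multilinearMap, Matrix.detRowAlternating]
    congr 1
    ext i' j
    by_cases h : i' = i
    · subst h; simp
    · simp [h]
  simp only [Finset.sum_apply, hrows, map_sum]

lemma linPoly_wedgeCoords_update_sum (y : Fin k → Fin n → R) (i : Fin k) {ι : Type*}
    (s : Finset ι) (x : ι → Fin n → R) :
    linPoly (wedgeCoords (Function.update y i (∑ j ∈ s, x j))) =
      ∑ j ∈ s, linPoly (wedgeCoords (Function.update y i (x j))) := by
  rw [wedgeCoords_update_sum, linPoly_sum]

end FirstRow

lemma pow_mem_V0 {m n k : ℕ} (x : Fin k → Fin n → ℝ) : linPoly (wedgeCoords x) ^ m ∈ V0 m n k :=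
  Submodule.subset_span ⟨x, rfl⟩

theorem V0_eq_span_products_general (m n k : ℕ) (hk : 1 ≤ k) :
    V0 m n k =
      Submodule.span ℝ {p | ∃ (x : Fin m → Fin n → ℝ) (y : Fin k → Fin n → ℝ),
        p = ∏ s : Fin m,
          linPoly (wedgeCoords (Function.update y ⟨0, hk⟩ (x s)))} := by
  set i₀ : Fin k := ⟨0, hk⟩
  apply le_antisymm
  · refine Submodule.span_le.2 ?_
    rintro _ ⟨x, rfl⟩
    refine Submodule.subset_span ⟨fun _ ↦ x i₀, x, ?_⟩
    simp only [Function.update_eq_self, Fin.prod_const]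
  · refine Submodule.span_le.2 ?_
    rintro _ ⟨x, y, rfl⟩
    have hpolar := factorial_card_smul_prod_eq_sum_neg_one_pow_smul_pow fun s ↦
      linPoly (wedgeCoords (Function.update y i₀ (x s)))
    simp only [Fintype.card_fin, ← linPoly_wedgeCoords_update_sum] at hpolar
    have hm : (m ! : ℝ) ≠ 0 := Nat.cast_ne_zero.2 m.factorial_ne_zero
    rw [SetLike.mem_coe, ← Submodule.smul_mem_iff _ hm, Nat.cast_smul_eq_nsmul, hpolar]
    exact Submodule.sum_mem _ fun t _ ↦ zsmul_mem (pow_mem_V0 _) _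

/-- `V₀(m,n,k)` coincides with the linear span of the vectors
`(x₁∧y₂∧…∧y_k) ∨ (x₂∧y₂∧…∧y_k) ∨ … ∨ (x_m∧y₂∧…∧y_k)`, where `x₁,…,x_m,y₂,…,y_k`
range over `ℝⁿ`.  (Here `y : Fin k → Fin n → ℝ` and only its rows `2,…,k` matter,
since row `1` is overwritten by `x_s` in the `s`-th factor.) -/
theorem V0_eq_span_products (m n k : ℕ) (hm : 1 ≤ m) (hk : 1 ≤ k) (hkn : k ≤ n) :
    V0 m n k =
      Submodule.span ℝ {p | ∃ (x : Fin m → Fin n → ℝ) (y : Fin k → Fin n → ℝ),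
        p = ∏ s : Fin m,
          linPoly (wedgeCoords (Function.update y ⟨0, hk⟩ (x s)))} :=
  V0_eq_span_products_general m n k hk
end

section
/- For every vector v ∈ V₀(m,n,k) and every chain σ, the orthogonal projection Pr(v,σ) of v onto the subspace L(σ) again belongs to V₀(m,n,k). -/
open scoped BigOperators

/-- `l_i(d)`: the number of occurrences of the index `i` among the tuples composing the
canonical basis vector (monomial) with exponent vector `d`. -/
def lcount {n k : ℕ} (d : PIdx n k →₀ ℕ) : Fin n → ℕ :=
  fun i => ∑ α : PIdx n k, if i ∈ α.1 then d α else 0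

/-- The chain of type `(k₁,…,k_n) = c`: the set of canonical basis vectors (identified with
their exponent vectors `d`, with `Σ d = m`) whose occurrence counts are `(l_i)_d = c`. -/
def chain (m n k : ℕ) (c : Fin n → ℕ) : Set (PIdx n k →₀ ℕ) :=
  {d | (∑ α, d α) = m ∧ lcount d = c}

/-- The condition for `(k₁,…,k_n) = c` to be the type of a chain: `Σ kᵢ = mk`,
each `kᵢ ≤ m`, and at least `k` of the `kᵢ` are nonzero. -/
def IsChainType (m n k : ℕ) (c : Fin n → ℕ) : Prop :=
  (∑ i, c i) = m * k ∧ (∀ i, c i ≤ m) ∧ k ≤ (Finset.univ.filter fun i => c i ≠ 0).card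

/-- `L(σ)`: the linear span of the chain of type `c`. -/
noncomputable def Lchain (m n k : ℕ) (c : Fin n → ℕ) :
    Submodule ℝ (MvPolynomial (PIdx n k) ℝ) :=
  Submodule.span ℝ {p | ∃ d ∈ chain m n k c, p = MvPolynomial.monomial d 1}

open Classical in
/-- `Pr(·,σ)`: the orthogonal projection onto `L(σ)` with respect to the inner product
making the canonical basis orthonormal; it keeps exactly the coefficients of the canonical
basis vectors lying in the chain `σ` and kills all the others. -/
noncomputable def projChain (m n k : ℕ) (c : Fin n → ℕ)
    (p : MvPolynomial (PIdx n k) ℝ) : MvPolynomial (PIdx n k) ℝ :=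
  ∑ d ∈ p.support, if d ∈ chain m n k c then MvPolynomial.monomial d (p.coeff d) else 0

/-!
The torus `(ℝˣ)ⁿ` acts on `Λᵏℝⁿ` by `e_α ↦ (∏_{i ∈ α} tᵢ) e_α`, hence on `Sᵐ(Λᵏℝⁿ)`, and `V₀` is
invariant because the action on `x₁ ∧ … ∧ x_k` just rescales the columns of the `xᵢ`.
A canonical basis vector `v` is a weight vector of weight `∏ tᵢ ^ (lᵢ)_v`, so `Pr(·,σ)` is the
projection onto a weight space. An invariant subspace contains the weight components of its
elements: for a single coordinate, the image of `v` under `t = (1,…,x,…,1)` is a polynomial in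
`x` whose coefficients are these components, and a Vandermonde matrix recovers them; the
coordinates are then treated one after the other. In the polynomial model the chain also
prescribes the degree `m`, which is automatic since `V₀` consists of forms of degree `m`.
-/

theorem Submodule.mem_of_forall_sum_pow_smul_mem {K M : Type*} [Field K] [CharZero K]
    [AddCommGroup M] [Module K M] {W : Submodule K M} {N : ℕ} {v : Fin N → M}
    (h : ∀ x : K, ∑ j : Fin N, x ^ (j : ℕ) • v j ∈ W) (j : Fin N) : v j ∈ W := by
  have hV : (Matrix.vandermonde fun i : Fin N => (i : K)).det ≠ 0 :=
    Matrix.det_vandermonde_ne_zero_iff.2 (Nat.cast_injective.comp Fin.val_injective)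
  rw [← W.ker_mkQ, LinearMap.mem_ker]
  refine (Module.forall_dual_apply_eq_zero_iff K _).1 fun φ => ?_
  refine congrFun (Matrix.eq_zero_of_mulVec_eq_zero hV (v := fun j => φ (W.mkQ (v j))) ?_) j
  ext i
  have hi : W.mkQ (∑ j : Fin N, (i : K) ^ (j : ℕ) • v j) = 0 := by
    rw [← LinearMap.mem_ker, W.ker_mkQ]
    exact h i
  simpa [Matrix.mulVec, dotProduct, Matrix.vandermonde_apply] using congrArg φ hi

namespace Finsupp

variable {σ ι M : Type*} [AddCommMonoid M]

theorem weight_apply_apply (w : σ → ι → M) (d : σ →₀ ℕ) (i : ι) :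
    weight w d i = weight (fun s => w s i) d := by
  simp [weight_apply, Finsupp.sum, Finset.sum_apply]

theorem weight_ite_apply [DecidableEq ι] (w : σ → ι → M) (t : Finset ι) (d : σ →₀ ℕ) (i : ι) :
    weight (fun s i => if i ∈ t then w s i else 0) d i =
      if i ∈ t then weight (fun s => w s i) d else 0 := by
  rw [weight_apply_apply]
  split_ifs <;> simp [weight_apply, *]

end Finsupp

open MvPolynomial Finsupp

namespace MvPolynomial

section CommSemiring

variable {σ R : Type*} [CommSemiring R]

theorem aeval_C_pow_mul_X_monomial (w : σ → ℕ) (x : R) (d : σ →₀ ℕ) (a : R) :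
    aeval (fun s => C (x ^ w s) * X s) (monomial d a) = x ^ weight w d • monomial d a := by
  rw [aeval_monomial, monomial_eq, weight_apply, smul_eq_C_mul]
  simp only [mul_pow, ← map_pow, ← pow_mul, Finsupp.prod, Finsupp.sum, smul_eq_mul, algebraMap_eq]
  rw [Finset.prod_mul_distrib, ← map_prod, Finset.prod_pow_eq_pow_sum]
  simp only [mul_comm (d _)]
  ring

theorem IsWeightedHomogeneous.aeval_C_pow_mul_X {w : σ → ℕ} {q : MvPolynomial σ R} {j : ℕ}
    (hq : q.IsWeightedHomogeneous w j) (x : R) :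
    aeval (fun s => C (x ^ w s) * X s) q = x ^ j • q := by
  conv_lhs => rw [q.as_sum]
  conv_rhs => rw [q.as_sum]
  rw [map_sum, Finset.smul_sum]
  refine Finset.sum_congr rfl fun d hd => ?_
  rw [aeval_C_pow_mul_X_monomial, hq (mem_support_iff.1 hd)]

theorem sum_weightedHomogeneousComponent_fin (w : σ → ℕ) (p : MvPolynomial σ R) :
    ∑ j : Fin (weightedTotalDegree w p + 1), weightedHomogeneousComponent w j p = p := by
  conv_rhs => rw [← sum_weightedHomogeneousComponent w p]
  rw [Fin.sum_univ_eq_sum_range (fun j => weightedHomogeneousComponent w j p)]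
  refine (finsum_eq_sum_of_support_subset _ fun j hj => ?_).symm
  simp only [Finset.coe_range, Set.mem_Iio, Nat.lt_succ_iff]
  by_contra! h
  exact hj (weightedHomogeneousComponent_eq_zero _ _ h)

theorem weightedHomogeneousComponent_mem_of_forall_apply {ι M : Type*} [Fintype ι]
    [AddCommMonoid M] {W : Submodule R (MvPolynomial σ R)} (w : σ → ι → M)
    (hW : ∀ i j, ∀ p ∈ W, weightedHomogeneousComponent (fun s => w s i) j p ∈ W)
    {p : MvPolynomial σ R} (hp : p ∈ W) (c : ι → M) :
    weightedHomogeneousComponent w c p ∈ W := by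
  classical
  suffices key : ∀ t : Finset ι, weightedHomogeneousComponent
      (fun s i => if i ∈ t then w s i else 0) (fun i => if i ∈ t then c i else 0) p ∈ W by
    simpa using key Finset.univ
  intro t
  induction t using Finset.induction_on with
  | empty =>
    convert hp using 1
    exact weightedHomogeneousComponent_eq_self fun d _ => by
      ext
      simp [weight_apply_apply, weight_apply]
  | insert i t hi ih =>
    convert hW i (c i) _ ih using 1
    ext d
    simp only [coeff_weightedHomogeneousComponent, ← ite_and]
    refine if_congr ?_ rfl rfl
    simp only [_root_.funext_iff, weight_ite_apply]
    simp only [Finset.mem_insert]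
    grind

end CommSemiring

variable {σ K : Type*} [Field K] [CharZero K] {W : Submodule K (MvPolynomial σ K)}

theorem weightedHomogeneousComponent_mem_of_forall_aeval_mem (w : σ → ℕ)
    (hW : ∀ x : K, ∀ p ∈ W, aeval (fun s => C (x ^ w s) * X s) p ∈ W)
    {p : MvPolynomial σ K} (hp : p ∈ W) (j : ℕ) : weightedHomogeneousComponent w j p ∈ W := by
  obtain hj | hj := le_or_gt j (weightedTotalDegree w p)
  · refine Submodule.mem_of_forall_sum_pow_smul_mem
      (v := fun i : Fin _ => weightedHomogeneousComponent w i p) (fun x => ?_)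
      ⟨j, Nat.lt_succ_of_le hj⟩
    convert hW x p hp using 1
    conv_rhs => rw [← sum_weightedHomogeneousComponent_fin w p, map_sum]
    exact Finset.sum_congr rfl fun i _ =>
      ((weightedHomogeneousComponent_isWeightedHomogeneous _ _).aeval_C_pow_mul_X x).symm
  · rw [weightedHomogeneousComponent_eq_zero _ _ hj]
    exact W.zero_mem

theorem weightedHomogeneousComponent_mem_of_forall_aeval_prod_mem {ι : Type*} [Fintype ι]
    (w : σ → ι → ℕ)
    (hW : ∀ t : ι → K, ∀ p ∈ W, aeval (fun s => C (∏ i, t i ^ w s i) * X s) p ∈ W)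
    {p : MvPolynomial σ K} (hp : p ∈ W) (c : ι → ℕ) :
    weightedHomogeneousComponent w c p ∈ W := by
  classical
  refine weightedHomogeneousComponent_mem_of_forall_apply w (fun i j q hq => ?_) hp c
  refine weightedHomogeneousComponent_mem_of_forall_aeval_mem _ (fun x r hr => ?_) hq j
  simpa [Pi.mulSingle_apply, ite_pow] using hW (Pi.mulSingle i x) r hr

end MvPolynomial

def indexIndicator {n k : ℕ} (α : PIdx n k) : Fin n → ℕ := fun i => if i ∈ α.1 then 1 else 0

theorem weight_indexIndicator {n k : ℕ} (d : PIdx n k →₀ ℕ) :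
    Finsupp.weight indexIndicator d = lcount d := by
  ext i
  simp [Finsupp.weight_eq_sum, lcount, Finset.sum_apply, indexIndicator]

theorem prod_pow_indexIndicator {R : Type*} [CommMonoid R] {n k : ℕ} (t : Fin n → R)
    (α : PIdx n k) : ∏ i, t i ^ indexIndicator α i = ∏ i ∈ α.1, t i := by
  simp [indexIndicator, pow_ite, Finset.prod_ite_mem]

theorem wedgeCoords_mul_col {R : Type} [CommRing R] {n k : ℕ} (t : Fin n → R)
    (x : Fin k → Fin n → R) :
    wedgeCoords (fun r j => t j * x r j) = fun α => (∏ j ∈ α.1, t j) * wedgeCoords x α := by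
  ext α
  have hprod : ∏ j, t (toTuple α j) = ∏ j ∈ α.1, t j := by
    rw [← Finset.prod_coe_sort α.1 t]
    exact Equiv.prod_comp (α.1.orderIsoOfFin α.2).toEquiv (fun j : α.1 => t j)
  rw [← hprod]
  exact Matrix.det_mul_row (fun j => t (toTuple α j)) _

theorem aeval_C_mul_X_linPoly {R : Type} [CommRing R] {n k : ℕ} (a w : PIdx n k → R) :
    aeval (fun α => C (a α) * X α) (linPoly w) = linPoly fun α => a α * w α := by
  simp only [linPoly, map_sum, map_mul, aeval_C, aeval_X, algebraMap_eq]
  exact Finset.sum_congr rfl fun α _ => by ring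

theorem aeval_C_prod_mul_X_mem_V0 {m n k : ℕ} (t : Fin n → ℝ) {p : MvPolynomial (PIdx n k) ℝ}
    (hp : p ∈ V0 m n k) :
    aeval (fun α => C (∏ i, t i ^ indexIndicator α i) * X α) p ∈ V0 m n k := by
  refine (Submodule.span_le (p := (V0 m n k).comap (aeval _).toLinearMap)).2 ?_ hp
  rintro _ ⟨x, rfl⟩
  refine Submodule.subset_span ⟨fun r j => t j * x r j, ?_⟩
  simp only [AlgHom.toLinearMap_apply, map_pow, aeval_C_mul_X_linPoly, prod_pow_indexIndicator,
    wedgeCoords_mul_col]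

theorem linPoly_isHomogeneous {R : Type} [CommRing R] {n k : ℕ} (w : PIdx n k → R) :
    (linPoly w).IsHomogeneous 1 :=
  IsHomogeneous.sum _ _ _ fun α _ => (isHomogeneous_X R α).C_mul (w α)

theorem V0_le_homogeneousSubmodule (m n k : ℕ) :
    V0 m n k ≤ homogeneousSubmodule (PIdx n k) ℝ m := by
  refine Submodule.span_le.2 ?_
  rintro _ ⟨x, rfl⟩
  simpa using (linPoly_isHomogeneous (wedgeCoords x)).pow m

theorem projChain_eq_weightedHomogeneousComponent {m n k : ℕ} (c : Fin n → ℕ)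
    {v : MvPolynomial (PIdx n k) ℝ} (hv : v.IsHomogeneous m) :
    projChain m n k c v = weightedHomogeneousComponent indexIndicator c v := by
  classical
  rw [projChain, weightedHomogeneousComponent_apply, Finset.sum_filter]
  refine Finset.sum_congr rfl fun d hd => if_congr ?_ rfl rfl
  have hdeg : ∑ α, d α = m := by
    rw [← Finsupp.degree_eq_sum, Finsupp.degree_eq_weight_one]
    exact hv (MvPolynomial.mem_support_iff.1 hd)
  simp [chain, hdeg, weight_indexIndicator]

theorem projChain_mem_V0_general (m n k : ℕ) (c : Fin n → ℕ)
    (v : MvPolynomial (PIdx n k) ℝ) (hv : v ∈ V0 m n k) :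
    projChain m n k c v ∈ V0 m n k := by
  rw [projChain_eq_weightedHomogeneousComponent c (V0_le_homogeneousSubmodule m n k hv)]
  exact weightedHomogeneousComponent_mem_of_forall_aeval_prod_mem _ aeval_C_prod_mul_X_mem_V0 hv c

/-- For every vector `v ∈ V₀(m,n,k)` and every chain `σ`, the orthogonal
projection `Pr(v,σ)` of `v` onto `L(σ)` again belongs to `V₀(m,n,k)`. -/
theorem projChain_mem_V0 (m n k : ℕ) (hm : 1 ≤ m) (hk : 1 ≤ k) (hkn : k ≤ n)
    (c : Fin n → ℕ) (hc : IsChainType m n k c)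
    (v : MvPolynomial (PIdx n k) ℝ) (hv : v ∈ V0 m n k) :
    projChain m n k c v ∈ V0 m n k :=
  projChain_mem_V0_general m n k c v hv
end
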